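/- arXiv:1010.5105 — 2 statements merged into one kernel-verified Lean document; each statement's English description precedes it below -/
import Mathlib

section
/- Let H:[0,∞)→[0,∞) be increasing and regularly varying at infinity with index ρ>0, and let A:[0,∞)→[0,∞) be continuous increasing with A(t)/t → C as t→∞ for some finite constant C ≥ 0. Then (1+ρ)/(t·H(t)) · ∫₀ᵗ H(s) dA(s) → C as t→∞. -/
open MeasureTheory Filter Set Topology

/-!
Cut `(0, t]` at the geometric points `δᵏ t`, `k ≤ n`, for some `0 < δ < 1`. On each piece `H`
lies between its values at the end points and the `A`-measure of the piece is an increment of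
`A`, so `∫₀ᵗ H dA` is squeezed between a lower and an upper Stieltjes sum. Divided by `t H(t)`,
these sums converge as `t → ∞`, by regular variation and `A(s)/s → C`, to
`C δ^ρ (1 - δ) ∑_{k<n} qᵏ` and `C qⁿ + C (1 - δ) ∑_{k<n} qᵏ`, where `q = δ^(ρ+1)`.
As `n → ∞` and then `δ → 1⁻` both tend to `C / (ρ + 1)`, because `(1 - δ) / (1 - δ^(ρ+1))`
is the reciprocal of a difference quotient of `x ↦ x^(ρ+1)` at `1`.
-/

theorem tendsto_of_squeeze_limits {ι α β : Type*} [TopologicalSpace β] [LinearOrder β]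
    [OrderTopology β] {F : Filter ι} [NeBot F] {l : Filter α} {f : α → β} {Llo Lhi : ι → β}
    {c : β} (hLlo : Tendsto Llo F (𝓝 c))
    (hlo : ∀ᶠ i in F, ∃ g : α → β, Tendsto g l (𝓝 (Llo i)) ∧ ∀ᶠ x in l, g x ≤ f x)
    (hLhi : Tendsto Lhi F (𝓝 c))
    (hhi : ∀ᶠ i in F, ∃ g : α → β, Tendsto g l (𝓝 (Lhi i)) ∧ ∀ᶠ x in l, f x ≤ g x) :
    Tendsto f l (𝓝 c) := by
  refine tendsto_order.2 ⟨fun a ha => ?_, fun a ha => ?_⟩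
  · obtain ⟨i, hai, g, hg, hgf⟩ := ((hLlo.eventually (lt_mem_nhds ha)).and hlo).exists
    filter_upwards [hg.eventually (lt_mem_nhds hai), hgf] with x hag hgx
    exact hag.trans_le hgx
  · obtain ⟨i, hai, g, hg, hfg⟩ := ((hLhi.eventually (gt_mem_nhds ha)).and hhi).exists
    filter_upwards [hg.eventually (gt_mem_nhds hai), hfg] with x hga hxg
    exact hxg.trans_lt hga

namespace Filter

instance curry_neBot {α β : Type*} {l : Filter α} {m : Filter β} [NeBot l] [NeBot m] :
    NeBot (l.curry m) := by
  refine ⟨fun h => ?_⟩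
  obtain ⟨a, ha⟩ := (mem_curry_iff.1 (h ▸ mem_bot : ∅ ∈ l.curry m)).exists
  obtain ⟨b, hb⟩ := ha.exists
  exact hb

theorem Tendsto.curry_nhds {α β γ : Type*} [TopologicalSpace γ] {la : Filter α}
    {lb : Filter β} {f : α → β → γ} {g : α → γ} {c : γ}
    (hf : ∀ᶠ a in la, Tendsto (f a) lb (𝓝 (g a))) (hg : Tendsto g la (𝓝 c)) :
    Tendsto ↿f (la.curry lb) (𝓝 c) := by
  refine (nhds_basis_opens c).tendsto_right_iff.2 fun s ⟨hcs, hs⟩ => eventually_curry_iff.2 ?_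
  filter_upwards [hf, hg.eventually (hs.mem_nhds hcs)] with a hfa hga
  exact hfa (hs.mem_nhds hga)

theorem Tendsto.comp_const_mul_div {f : ℝ → ℝ} {C : ℝ}
    (hf : Tendsto (fun t => f t / t) atTop (𝓝 C)) {b : ℝ} (hb : 0 ≤ b) :
    Tendsto (fun t => f (b * t) / t) atTop (𝓝 (C * b)) := by
  rcases hb.eq_or_lt with rfl | hb
  · simpa using tendsto_const_nhds.div_atTop tendsto_id
  refine ((hf.comp (tendsto_id.const_mul_atTop hb)).mul_const b).congr' ?_
  filter_upwards [eventually_gt_atTop 0] with t ht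
  simp only [Function.comp_apply, id]
  field_simp

end Filter

namespace Real

theorem rpow_pow_mul_pow {x : ℝ} (hx : 0 < x) (r : ℝ) (k : ℕ) :
    (x ^ k) ^ r * x ^ k = (x ^ (r + 1)) ^ k := by
  rw [← rpow_pow_comm hx.le, ← mul_pow, rpow_add_one hx.ne']

theorem tendsto_one_sub_mul_inv_one_sub_rpow {p : ℝ} (hp : p ≠ 0) :
    Tendsto (fun x : ℝ => (1 - x) * (1 - x ^ p)⁻¹) (𝓝[<] 1) (𝓝 p⁻¹) := by
  have hslope := hasDerivAt_iff_tendsto_slope.1 (hasDerivAt_rpow_const (p := p)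
    (Or.inl one_ne_zero))
  rw [one_rpow, mul_one] at hslope
  refine ((hslope.inv₀ hp).mono_left (nhdsLT_le_nhdsNE 1)).congr fun x => ?_
  rw [slope_def_field, one_rpow, inv_div, div_eq_mul_inv, ← neg_sub 1 x, ← neg_sub 1 (x ^ p),
    neg_mul, inv_neg, mul_neg, neg_neg]

end Real

section StieltjesSums

variable {μ : Measure ℝ} [IsLocallyFiniteMeasure μ] {f : ℝ → ℝ}

theorem Monotone.setIntegral_Ioc_le (hf : Monotone f) (a b : ℝ) :
    ∫ x in Ioc a b, f x ∂μ ≤ f b * μ.real (Ioc a b) := by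
  calc ∫ x in Ioc a b, f x ∂μ ≤ ∫ _ in Ioc a b, f b ∂μ :=
        setIntegral_mono_on (hf.locallyIntegrable.integrableOn_isCompact isCompact_Icc
          |>.mono_set Ioc_subset_Icc_self) (integrableOn_const measure_Ioc_lt_top.ne)
          measurableSet_Ioc fun x hx => hf hx.2
    _ = f b * μ.real (Ioc a b) := by rw [setIntegral_const, smul_eq_mul, mul_comm]

theorem Monotone.mul_measureReal_le_setIntegral_Ioc (hf : Monotone f) (a b : ℝ) :
    f a * μ.real (Ioc a b) ≤ ∫ x in Ioc a b, f x ∂μ := by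
  calc f a * μ.real (Ioc a b) = ∫ _ in Ioc a b, f a ∂μ := by
        rw [setIntegral_const, smul_eq_mul, mul_comm]
    _ ≤ ∫ x in Ioc a b, f x ∂μ :=
        setIntegral_mono_on (integrableOn_const measure_Ioc_lt_top.ne)
          (hf.locallyIntegrable.integrableOn_isCompact isCompact_Icc
          |>.mono_set Ioc_subset_Icc_self) measurableSet_Ioc fun x hx => hf hx.1.le

end StieltjesSums

theorem setIntegral_Ioc_eq_add_sum {E : Type*} [NormedAddCommGroup E] [NormedSpace ℝ E]
    {μ : Measure ℝ} {f : ℝ → E} {x : ℕ → ℝ} {c : ℝ} (hx : Antitone x) (hc : ∀ k, c ≤ x k)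
    (hf : IntegrableOn f (Ioc c (x 0)) μ) (n : ℕ) :
    ∫ s in Ioc c (x 0), f s ∂μ =
      ∫ s in Ioc c (x n), f s ∂μ + ∑ k ∈ Finset.range n, ∫ s in Ioc (x (k + 1)) (x k), f s ∂μ := by
  induction n with
  | zero => simp
  | succ n ih =>
    have hsub : Ioc c (x n) ⊆ Ioc c (x 0) := Ioc_subset_Ioc_right (hx n.zero_le)
    rw [ih, Finset.sum_range_succ, ← add_assoc, add_right_comm,
      ← setIntegral_union (Ioc_disjoint_Ioc_of_le le_rfl) measurableSet_Ioc
        (hf.mono_set ((Ioc_subset_Ioc_right (hx n.le_succ)).trans hsub))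
        (hf.mono_set ((Ioc_subset_Ioc_left (hc _)).trans hsub)),
      Ioc_union_Ioc_eq_Ioc (hc _) (hx n.le_succ)]

namespace StieltjesFunction

theorem measureReal_Ioc (A : StieltjesFunction ℝ) {a b : ℝ} (hab : a ≤ b) :
    A.measure.real (Ioc a b) = A b - A a := by
  rw [measureReal_def, A.measure_Ioc, ENNReal.toReal_ofReal (sub_nonneg.2 (A.mono hab))]

variable (A : StieltjesFunction ℝ) {H : ℝ → ℝ} {x : ℕ → ℝ} {c : ℝ}

theorem setIntegral_Ioc_le_sum (hH : Monotone H) (hx : Antitone x) (hc : ∀ k, c ≤ x k)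
    (n : ℕ) :
    ∫ s in Ioc c (x 0), H s ∂A.measure ≤
      H (x n) * (A (x n) - A c) + ∑ k ∈ Finset.range n, H (x k) * (A (x k) - A (x (k + 1))) := by
  rw [setIntegral_Ioc_eq_add_sum hx hc (hH.locallyIntegrable.integrableOn_isCompact
    isCompact_Icc |>.mono_set Ioc_subset_Icc_self) n, ← A.measureReal_Ioc (hc n)]
  gcongr with k
  · exact hH.setIntegral_Ioc_le _ _
  · rw [← A.measureReal_Ioc (hx k.le_succ)]
    exact hH.setIntegral_Ioc_le _ _

theorem sum_le_setIntegral_Ioc (hH : Monotone H) (hHc : 0 ≤ H c) (hx : Antitone x)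
    (hc : ∀ k, c ≤ x k) (n : ℕ) :
    ∑ k ∈ Finset.range n, H (x (k + 1)) * (A (x k) - A (x (k + 1))) ≤
      ∫ s in Ioc c (x 0), H s ∂A.measure := by
  rw [setIntegral_Ioc_eq_add_sum hx hc (hH.locallyIntegrable.integrableOn_isCompact
    isCompact_Icc |>.mono_set Ioc_subset_Icc_self) n]
  refine le_add_of_nonneg_of_le (setIntegral_nonneg measurableSet_Ioc fun s hs =>
    hHc.trans (hH hs.1.le)) (Finset.sum_le_sum fun k _ => ?_)
  rw [← A.measureReal_Ioc (hx k.le_succ)]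
  exact hH.mul_measureReal_le_setIntegral_Ioc _ _

end StieltjesFunction

def IsRegularlyVarying (H : ℝ → ℝ) (ρ : ℝ) : Prop :=
  ∀ l : ℝ, 0 < l → Tendsto (fun t => H (l * t) / H t) atTop (𝓝 (l ^ ρ))

section RegularVariation

variable {ρ C : ℝ} {H A : ℝ → ℝ}

theorem IsRegularlyVarying.tendsto_mul_sub_div_mul (hH : IsRegularlyVarying H ρ)
    (hA : Tendsto (fun t => A t / t) atTop (𝓝 C)) {a b c : ℝ} (ha : 0 < a) (hb : 0 ≤ b)
    (hc : 0 ≤ c) :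
    Tendsto (fun t => H (a * t) * (A (b * t) - A (c * t)) / (t * H t)) atTop
      (𝓝 (a ^ ρ * (C * b - C * c))) :=
  ((hH a ha).mul ((hA.comp_const_mul_div hb).sub (hA.comp_const_mul_div hc))).congr
    fun t => by ring

theorem IsRegularlyVarying.tendsto_lower_sum_div (hH : IsRegularlyVarying H ρ)
    (hA : Tendsto (fun t => A t / t) atTop (𝓝 C)) {δ : ℝ} (hδ : 0 < δ) (n : ℕ) :
    Tendsto (fun t => (∑ k ∈ Finset.range n,
        H (δ ^ (k + 1) * t) * (A (δ ^ k * t) - A (δ ^ (k + 1) * t))) / (t * H t)) atTop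
      (𝓝 (C * δ ^ ρ * ((1 - δ) * ∑ k ∈ Finset.range n, (δ ^ (ρ + 1)) ^ k))) := by
  simp only [Finset.sum_div, Finset.mul_sum]
  refine tendsto_finsetSum _ fun k _ => ?_
  convert hH.tendsto_mul_sub_div_mul hA (pow_pos hδ (k + 1)) (pow_nonneg hδ.le k)
    (pow_nonneg hδ.le (k + 1)) using 2
  rw [← Real.rpow_pow_mul_pow hδ, pow_succ, Real.mul_rpow (pow_nonneg hδ.le k) hδ.le]
  ring

theorem IsRegularlyVarying.tendsto_upper_sum_div (hH : IsRegularlyVarying H ρ)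
    (hA : Tendsto (fun t => A t / t) atTop (𝓝 C)) {δ : ℝ} (hδ : 0 < δ) (n : ℕ) :
    Tendsto (fun t => (H (δ ^ n * t) * (A (δ ^ n * t) - A 0) + ∑ k ∈ Finset.range n,
        H (δ ^ k * t) * (A (δ ^ k * t) - A (δ ^ (k + 1) * t))) / (t * H t)) atTop
      (𝓝 (C * (δ ^ (ρ + 1)) ^ n + C * ((1 - δ) * ∑ k ∈ Finset.range n, (δ ^ (ρ + 1)) ^ k))) := by
  simp only [add_div, Finset.sum_div, Finset.mul_sum]
  refine Tendsto.add ?_ (tendsto_finsetSum _ fun k _ => ?_)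
  · convert hH.tendsto_mul_sub_div_mul hA (pow_pos hδ n) (pow_nonneg hδ.le n) le_rfl using 2
    · simp
    · rw [← Real.rpow_pow_mul_pow hδ]
      ring
  · convert hH.tendsto_mul_sub_div_mul hA (pow_pos hδ k) (pow_nonneg hδ.le k)
      (pow_nonneg hδ.le (k + 1)) using 2
    rw [← Real.rpow_pow_mul_pow hδ, pow_succ]
    ring

end RegularVariation

section GeometricLimits

variable {ρ : ℝ} (hρ : 0 < ρ + 1) (C : ℝ)
include hρ

theorem tendsto_lower_sum_limit :
    Tendsto ↿(fun δ n => C * δ ^ ρ * ((1 - δ) * ∑ k ∈ Finset.range n, (δ ^ (ρ + 1)) ^ k))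
      ((𝓝[<] 1).curry atTop) (𝓝 (C * (ρ + 1)⁻¹)) := by
  refine Tendsto.curry_nhds (g := fun δ => C * δ ^ ρ * ((1 - δ) * (1 - δ ^ (ρ + 1))⁻¹)) ?_ ?_
  · filter_upwards [Ioo_mem_nhdsLT zero_lt_one] with δ hδ
    exact ((hasSum_geometric_of_lt_one (Real.rpow_nonneg hδ.1.le _)
      (Real.rpow_lt_one hδ.1.le hδ.2 hρ)).tendsto_sum_nat.const_mul _).const_mul _
  · have hpow : Tendsto (fun δ : ℝ => δ ^ ρ) (𝓝[<] 1) (𝓝 1) := by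
      simpa using (Real.continuousAt_rpow_const 1 ρ (Or.inl one_ne_zero)).tendsto.mono_left
        nhdsWithin_le_nhds
    simpa using (hpow.const_mul C).mul (Real.tendsto_one_sub_mul_inv_one_sub_rpow hρ.ne')

-- The limit is iterated: along `𝓝[<] 1 ×ˢ atTop` the tail `qⁿ` need not tend to `0`.
theorem tendsto_upper_sum_limit :
    Tendsto ↿(fun δ n => C * (δ ^ (ρ + 1)) ^ n +
        C * ((1 - δ) * ∑ k ∈ Finset.range n, (δ ^ (ρ + 1)) ^ k))
      ((𝓝[<] 1).curry atTop) (𝓝 (C * (ρ + 1)⁻¹)) := by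
  refine Tendsto.curry_nhds (g := fun δ => C * 0 + C * ((1 - δ) * (1 - δ ^ (ρ + 1))⁻¹)) ?_ ?_
  · filter_upwards [Ioo_mem_nhdsLT zero_lt_one] with δ hδ
    have hq0 : 0 ≤ δ ^ (ρ + 1) := Real.rpow_nonneg hδ.1.le _
    have hq1 : δ ^ (ρ + 1) < 1 := Real.rpow_lt_one hδ.1.le hδ.2 hρ
    exact ((tendsto_pow_atTop_nhds_zero_of_lt_one hq0 hq1).const_mul C).add
      (((hasSum_geometric_of_lt_one hq0 hq1).tendsto_sum_nat.const_mul _).const_mul _)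
  · simpa using (Real.tendsto_one_sub_mul_inv_one_sub_rpow hρ.ne').const_mul C

end GeometricLimits

theorem stmt0_general (ρ : ℝ) (hρ : 0 < ρ)
    (H : ℝ → ℝ) (hHmono : Monotone H) (hHnn : ∀ t, 0 ≤ H t)
    (hHrv : ∀ l : ℝ, 0 < l → Tendsto (fun t => H (l * t) / H t) atTop (𝓝 (l ^ ρ)))
    (A : StieltjesFunction ℝ)
    (C : ℝ)
    (hA : Tendsto (fun t => A t / t) atTop (𝓝 C)) :
    Tendsto (fun t => (1 + ρ) / (t * H t) * ∫ s in Ioc (0:ℝ) t, H s ∂A.measure)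
      atTop (𝓝 C) := by
  have hρ1 : 0 < ρ + 1 := by linarith
  have hH : IsRegularlyVarying H ρ := hHrv
  have hδ : ∀ᶠ p : ℝ × ℕ in (𝓝[<] 1).curry atTop, p.1 ∈ Ioo 0 1 := by
    rw [eventually_curry_iff]
    filter_upwards [Ioo_mem_nhdsLT zero_lt_one] with δ hδ using .of_forall fun _ => hδ
  have hnorm : Tendsto (fun t => (∫ s in Ioc (0:ℝ) t, H s ∂A.measure) / (t * H t)) atTop
      (𝓝 (C * (ρ + 1)⁻¹)) := by
    refine tendsto_of_squeeze_limits (tendsto_lower_sum_limit hρ1 C) ?_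
      (tendsto_upper_sum_limit hρ1 C) ?_ <;> filter_upwards [hδ] with ⟨δ, n⟩ ⟨hδ0, hδ1⟩
    · refine ⟨_, hH.tendsto_lower_sum_div hA hδ0 n, ?_⟩
      filter_upwards [eventually_ge_atTop 0] with t ht
      refine div_le_div_of_nonneg_right ?_ (mul_nonneg ht (hHnn t))
      simpa using A.sum_le_setIntegral_Ioc hHmono (hHnn 0) (x := fun k => δ ^ k * t)
        ((pow_right_anti₀ hδ0.le hδ1.le).mul_const ht) (fun k => by positivity) n
    · refine ⟨_, hH.tendsto_upper_sum_div hA hδ0 n, ?_⟩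
      filter_upwards [eventually_ge_atTop 0] with t ht
      refine div_le_div_of_nonneg_right ?_ (mul_nonneg ht (hHnn t))
      simpa using A.setIntegral_Ioc_le_sum hHmono (x := fun k => δ ^ k * t)
        ((pow_right_anti₀ hδ0.le hδ1.le).mul_const ht) (fun k => by positivity) n
  have hlim := hnorm.const_mul (1 + ρ)
  rw [add_comm 1 ρ, mul_left_comm, mul_inv_cancel₀ hρ1.ne', mul_one] at hlim
  exact hlim.congr fun t => by ring

/-- Let H:[0,∞)→[0,∞) be increasing and regularly varying at infinity with
index ρ>0, and let A:[0,∞)→[0,∞) be continuous increasing with A(t)/t → C as t→∞ for some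
finite constant C ≥ 0. Then (1+ρ)/(t·H(t)) · ∫₀ᵗ H(s) dA(s) → C as t→∞. -/
theorem stmt0 (ρ : ℝ) (hρ : 0 < ρ)
    (H : ℝ → ℝ) (hHmono : Monotone H) (hHnn : ∀ t, 0 ≤ H t)
    (hHrv : ∀ l : ℝ, 0 < l → Tendsto (fun t => H (l * t) / H t) atTop (𝓝 (l ^ ρ)))
    (A : StieltjesFunction ℝ) (hAcont : Continuous A) (hAnn : ∀ t, 0 ≤ t → 0 ≤ A t)
    (C : ℝ) (hC : 0 ≤ C)
    (hA : Tendsto (fun t => A t / t) atTop (𝓝 C)) :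
    Tendsto (fun t => (1 + ρ) / (t * H t) * ∫ s in Ioc (0:ℝ) t, H s ∂A.measure)
      atTop (𝓝 C) :=
  stmt0_general ρ hρ H hHmono hHnn hHrv A C hA
end

section
/- In the limit experiment {P̃_h : h∈ℝ} with likelihood ratios dP̃_h/dP̃_0 = exp{W̃(h) − |h|/2} for double-sided standard Brownian motion W̃, the squared Hellinger distance satisfies H²(P̃_{h′}, P̃_h) = 2(1 − exp(−|h′−h|/8)) for all h, h′ ∈ ℝ with sgn(h′)=sgn(h); consequently H(P̃_{h′}, P̃_h) ∼ |h′−h|^{1/2}/2 as h′→h, i.e., the parametrization is Hölder-1/2 smooth in Hellinger distance. -/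
/-!
For `0 ≤ h ≤ h'` on one side of the origin, with `W` the Brownian motion on that side,
`√L(h') - √L(h) = e^{W(h)/2 - h/4} (e^{Y/2 - (h'-h)/4} - 1)` where `Y = W(h') - W(h)` is
independent of `W(h)`. The expected square therefore factors as
`E e^{W(h) - h/2} · E (e^{Y/2 - (h'-h)/4} - 1)² = 1 · (1 - 2 e^{-(h'-h)/8} + 1)`,
both factors being read off the Gaussian moment generating function. The asymptotics follow
from `1 - e^{-u/8} ∼ u/8` as `u → 0`.
-/

open Filter Topology MeasureTheory ProbabilityTheory
open scoped NNReal

section Gaussian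

variable {Ω : Type*} [MeasurableSpace Ω] {P : Measure Ω} {X Y : Ω → ℝ} {s t : ℝ≥0}

lemma aemeasurable_of_map_eq_gaussianReal {μ : ℝ} {v : ℝ≥0}
    (hX : P.map X = gaussianReal μ v) : AEMeasurable X P :=
  aemeasurable_of_map_neZero (by rw [hX]; infer_instance)

lemma integrable_exp_mul_of_map_eq_gaussianReal [NeZero P] {μ : ℝ} {v : ℝ≥0}
    (hX : P.map X = gaussianReal μ v) (c : ℝ) :
    Integrable (fun ω ↦ Real.exp (c * X ω)) P := by
  rw [← mgf_pos_iff, mgf_gaussianReal hX]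
  exact Real.exp_pos _

variable [IsProbabilityMeasure P]

lemma integral_sq_exp_half_sub_one_of_map_eq_gaussianReal (hY : P.map Y = gaussianReal 0 t) :
    ∫ ω, (Real.exp (Y ω / 2 - t / 4) - 1) ^ 2 ∂P = 2 * (1 - Real.exp (-t / 8)) := by
  have hexpand : ∀ ω, (Real.exp (Y ω / 2 - t / 4) - 1) ^ 2
      = Real.exp (-t / 2) * Real.exp (1 * Y ω)
        - 2 * Real.exp (-t / 4) * Real.exp (1 / 2 * Y ω) + 1 := fun ω ↦ by
    rw [sub_sq, sq, ← Real.exp_add, mul_one, one_pow, ← Real.exp_add, mul_assoc 2,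
      ← Real.exp_add]
    ring_nf
  have hint := integrable_exp_mul_of_map_eq_gaussianReal hY
  have h1 : Integrable (fun ω ↦ Real.exp (-t / 2) * Real.exp (1 * Y ω)) P :=
    (hint 1).const_mul _
  have h2 : Integrable (fun ω ↦ 2 * Real.exp (-t / 4) * Real.exp (1 / 2 * Y ω)) P :=
    (hint _).const_mul _
  simp_rw [hexpand]
  rw [integral_add ?_ (integrable_const _), integral_sub h1 h2, integral_const_mul,
    integral_const_mul]
  · change Real.exp (-t / 2) * mgf Y P 1 - 2 * Real.exp (-t / 4) * mgf Y P (1 / 2)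
      + ∫ _, (1 : ℝ) ∂P = _
    simp only [mgf_gaussianReal hY, integral_const, probReal_univ, one_smul, mul_assoc,
      ← Real.exp_add]
    rw [show -(t : ℝ) / 2 + (0 * 1 + t * 1 ^ 2 / 2) = 0 by ring,
      show -(t : ℝ) / 4 + (0 * (1 / 2) + t * (1 / 2) ^ 2 / 2) = -t / 8 by ring, Real.exp_zero]
    ring
  · exact h1.sub h2

lemma integral_sq_exp_sub_exp_of_indepFun (hX : P.map X = gaussianReal 0 s)
    (hY : P.map Y = gaussianReal 0 t) (hXY : IndepFun X Y P) :
    ∫ ω, (Real.exp ((X ω + Y ω) / 2 - (s + t) / 4) - Real.exp (X ω / 2 - s / 4)) ^ 2 ∂P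
      = 2 * (1 - Real.exp (-t / 8)) := by
  have hfactor : ∀ ω,
      (Real.exp ((X ω + Y ω) / 2 - (s + t) / 4) - Real.exp (X ω / 2 - s / 4)) ^ 2
        = Real.exp (-s / 2) * Real.exp (1 * X ω) * (Real.exp (Y ω / 2 - t / 4) - 1) ^ 2 := by
    intro ω
    have hsum : Real.exp ((X ω + Y ω) / 2 - (s + t) / 4)
        = Real.exp (X ω / 2 - s / 4) * Real.exp (Y ω / 2 - t / 4) := by
      rw [← Real.exp_add]; ring_nf
    have hsq : Real.exp (-s / 2) * Real.exp (1 * X ω) = Real.exp (X ω / 2 - s / 4) ^ 2 := by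
      rw [← Real.exp_add, sq, ← Real.exp_add]; ring_nf
    rw [hsum, hsq]
    ring
  have hφ : Measurable fun x ↦ Real.exp (-s / 2) * Real.exp (1 * x) := by fun_prop
  have hψ : Measurable fun y ↦ (Real.exp (y / 2 - t / 4) - 1) ^ 2 := by fun_prop
  have hXm := aemeasurable_of_map_eq_gaussianReal hX
  have hYm := aemeasurable_of_map_eq_gaussianReal hY
  simp_rw [hfactor]
  calc _ = (∫ ω, Real.exp (-s / 2) * Real.exp (1 * X ω) ∂P)
        * ∫ ω, (Real.exp (Y ω / 2 - t / 4) - 1) ^ 2 ∂P :=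
        (hXY.comp hφ hψ).integral_fun_mul_eq_mul_integral
          (hφ.comp_aemeasurable hXm).aestronglyMeasurable
          (hψ.comp_aemeasurable hYm).aestronglyMeasurable
    _ = 2 * (1 - Real.exp (-t / 8)) := by
      rw [integral_const_mul, integral_sq_exp_half_sub_one_of_map_eq_gaussianReal hY]
      change Real.exp (-s / 2) * mgf X P 1 * _ = _
      rw [mgf_gaussianReal hX, ← Real.exp_add,
        show -(s : ℝ) / 2 + (0 * 1 + s * 1 ^ 2 / 2) = 0 by ring, Real.exp_zero, one_mul]

end Gaussian

section IndependentGaussianIncrements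

variable {Ω : Type*} [MeasurableSpace Ω] {P : Measure Ω} {B : ℝ → Ω → ℝ}

structure HasIndepGaussianIncrements (B : ℝ → Ω → ℝ) (P : Measure Ω) : Prop where
  map_sub : ∀ s t : ℝ, 0 ≤ s → s ≤ t →
    P.map (fun ω ↦ B t ω - B s ω) = gaussianReal 0 (t - s).toNNReal
  indepFun_sub : ∀ s t u : ℝ, 0 ≤ s → s ≤ t → t ≤ u →
    IndepFun (fun ω ↦ B t ω - B s ω) (fun ω ↦ B u ω - B t ω) P

variable [IsProbabilityMeasure P]

lemma HasIndepGaussianIncrements.integral_sq_exp_sub_exp_of_le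
    (hB : HasIndepGaussianIncrements B P) (h0 : ∀ ω, B 0 ω = 0) {h h' : ℝ} (hh : 0 ≤ h)
    (hh' : h ≤ h') :
    ∫ ω, (Real.exp (B h' ω / 2 - h' / 4) - Real.exp (B h ω / 2 - h / 4)) ^ 2 ∂P
      = 2 * (1 - Real.exp (-(h' - h) / 8)) := by
  have hX := hB.map_sub 0 h le_rfl hh
  have hXY := hB.indepFun_sub 0 h h' le_rfl hh hh'
  simp only [h0, sub_zero] at hX hXY
  have key := integral_sq_exp_sub_exp_of_indepFun hX (hB.map_sub h h' hh hh') hXY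
  simpa only [Real.coe_toNNReal _ hh, Real.coe_toNNReal _ (sub_nonneg.2 hh'),
    add_sub_cancel] using key

lemma HasIndepGaussianIncrements.integral_sq_exp_sub_exp (hB : HasIndepGaussianIncrements B P)
    (h0 : ∀ ω, B 0 ω = 0) {h h' : ℝ} (hh : 0 ≤ h) (hh' : 0 ≤ h') :
    ∫ ω, (Real.exp (B h' ω / 2 - h' / 4) - Real.exp (B h ω / 2 - h / 4)) ^ 2 ∂P
      = 2 * (1 - Real.exp (-|h' - h| / 8)) := by
  rcases le_total h h' with hle | hle
  · rw [abs_of_nonneg (sub_nonneg.2 hle)]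
    exact hB.integral_sq_exp_sub_exp_of_le h0 hh hle
  · simp_rw [sub_sq_comm (Real.exp (B h' _ / 2 - h' / 4))]
    rw [abs_sub_comm, abs_of_nonneg (sub_nonneg.2 hle)]
    exact hB.integral_sq_exp_sub_exp_of_le h0 hh' hle

end IndependentGaussianIncrements

lemma tendsto_one_sub_exp_neg_div_div (a : ℝ) :
    Tendsto (fun x ↦ (1 - Real.exp (-x / a)) / x) (𝓝[≠] 0) (𝓝 a⁻¹) := by
  have hderiv : HasDerivAt (fun x ↦ 1 - Real.exp (-x / a)) a⁻¹ 0 := by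
    have := ((hasDerivAt_id (0 : ℝ)).neg.div_const a).exp.const_sub 1
    simpa [neg_div, one_div] using this
  simpa [slope_fun_def_field] using hasDerivAt_iff_tendsto_slope.mp hderiv

lemma tendsto_abs_sub_nhdsNE (h : ℝ) :
    Tendsto (fun h' : ℝ ↦ |h' - h|) (𝓝[≠] h) (𝓝[≠] 0) := by
  refine tendsto_nhdsWithin_of_tendsto_nhds_of_eventually_within _ ?_ ?_
  · exact ((continuous_sub_right h).abs.tendsto' h 0 (by simp)).mono_left nhdsWithin_le_nhds
  · filter_upwards [self_mem_nhdsWithin] with h' hh'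
    simpa [sub_eq_zero] using hh'

lemma tendsto_sqrt_two_mul_one_sub_exp_div_rpow (h : ℝ) :
    Tendsto (fun h' : ℝ =>
        Real.sqrt (2 * (1 - Real.exp (-|h' - h| / 8))) / |h' - h| ^ ((1:ℝ)/2))
      (𝓝[≠] h) (𝓝 (1/2)) := by
  have hlim : Tendsto (fun u ↦ Real.sqrt (2 * ((1 - Real.exp (-u / 8)) / u))) (𝓝[≠] 0)
      (𝓝 (Real.sqrt (2 * 8⁻¹))) :=
    ((tendsto_one_sub_exp_neg_div_div 8).const_mul 2).sqrt
  rw [show Real.sqrt (2 * 8⁻¹) = 1 / 2 by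
    rw [show (2 : ℝ) * 8⁻¹ = (1 / 2) ^ 2 by norm_num, Real.sqrt_sq (by norm_num)]] at hlim
  refine (hlim.comp (tendsto_abs_sub_nhdsNE h)).congr fun h' ↦ ?_
  rw [Function.comp_apply, mul_div_assoc', Real.sqrt_div' _ (abs_nonneg _),
    Real.sqrt_eq_rpow |h' - h|]

theorem stmt11_general {Ω : Type*} [MeasurableSpace Ω] (P : Measure Ω) [IsProbabilityMeasure P]
    (Bp Bm : ℝ → Ω → ℝ)
    (hp0 : ∀ ω, Bp 0 ω = 0) (hm0 : ∀ ω, Bm 0 ω = 0)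
    (hpG : ∀ s t : ℝ, 0 ≤ s → s ≤ t →
      Measure.map (fun ω => Bp t ω - Bp s ω) P = gaussianReal 0 (Real.toNNReal (t - s)))
    (hmG : ∀ s t : ℝ, 0 ≤ s → s ≤ t →
      Measure.map (fun ω => Bm t ω - Bm s ω) P = gaussianReal 0 (Real.toNNReal (t - s)))
    (hpI : ∀ s t u : ℝ, 0 ≤ s → s ≤ t → t ≤ u →
      IndepFun (fun ω => Bp t ω - Bp s ω) (fun ω => Bp u ω - Bp t ω) P)
    (hmI : ∀ s t u : ℝ, 0 ≤ s → s ≤ t → t ≤ u →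
      IndepFun (fun ω => Bm t ω - Bm s ω) (fun ω => Bm u ω - Bm t ω) P)
    (Wt : ℝ → Ω → ℝ) (hWt : ∀ x ω, Wt x ω = if 0 ≤ x then Bp x ω else Bm (-x) ω)
    (L : ℝ → Ω → ℝ) (hL : ∀ x ω, L x ω = Real.exp (Wt x ω - |x| / 2)) :
    (∀ h h' : ℝ, 0 ≤ h * h' →
      ∫ ω, (Real.sqrt (L h' ω) - Real.sqrt (L h ω))^2 ∂P
        = 2 * (1 - Real.exp (-|h' - h| / 8))) ∧
    (∀ h : ℝ,
      Tendsto (fun h' : ℝ =>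
          Real.sqrt (2 * (1 - Real.exp (-|h' - h| / 8))) / |h' - h| ^ ((1:ℝ)/2))
        (𝓝[≠] h) (𝓝 (1/2))) := by
  have hsqrt : ∀ x ω, Real.sqrt (L x ω) = Real.exp (Wt x ω / 2 - |x| / 4) := fun x ω ↦ by
    rw [hL, ← Real.exp_half]
    ring_nf
  have hWp : ∀ x, 0 ≤ x → Wt x = Bp x := fun x hx ↦ funext fun ω ↦ by rw [hWt, if_pos hx]
  have hWm : ∀ x, x ≤ 0 → Wt x = Bm (-x) := fun x hx ↦ funext fun ω ↦ by
    rcases hx.lt_or_eq with hneg | rfl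
    · rw [hWt, if_neg hneg.not_ge]
    · rw [hWt, if_pos le_rfl, hp0, neg_zero, hm0]
  refine ⟨fun h h' hhh' ↦ ?_, tendsto_sqrt_two_mul_one_sub_exp_div_rpow⟩
  simp_rw [hsqrt]
  rcases mul_nonneg_iff.mp hhh' with ⟨hh, hh'⟩ | ⟨hh, hh'⟩
  · rw [hWp h hh, hWp h' hh', abs_of_nonneg hh, abs_of_nonneg hh']
    exact HasIndepGaussianIncrements.integral_sq_exp_sub_exp ⟨hpG, hpI⟩ hp0 hh hh'
  · have habs : |h' - h| = |-h' - -h| := by rw [← abs_neg]; congr 1; ring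
    rw [hWm h hh, hWm h' hh', abs_of_nonpos hh, abs_of_nonpos hh', habs]
    exact HasIndepGaussianIncrements.integral_sq_exp_sub_exp ⟨hmG, hmI⟩ hm0
      (neg_nonneg.2 hh) (neg_nonneg.2 hh')

/-- in the limit experiment with likelihood ratios
dP̃_h/dP̃_0 = L(h) = exp{W̃(h) − |h|/2} for double-sided standard Brownian motion W̃,
the squared Hellinger distance H²(P̃_{h′},P̃_h) = E₀[(√L(h′) − √L(h))²] equals
2(1 − exp(−|h′−h|/8)) whenever sgn(h′)=sgn(h); consequently
H(P̃_{h′},P̃_h) ∼ |h′−h|^{1/2}/2 as h′→h (Hölder-1/2 smoothness in Hellinger distance). -/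
theorem stmt11 {Ω : Type*} [MeasurableSpace Ω] (P : Measure Ω) [IsProbabilityMeasure P]
    (Bp Bm : ℝ → Ω → ℝ)
    (hmp : ∀ t, Measurable (Bp t)) (hmm : ∀ t, Measurable (Bm t))
    (hp0 : ∀ ω, Bp 0 ω = 0) (hm0 : ∀ ω, Bm 0 ω = 0)
    (hpG : ∀ s t : ℝ, 0 ≤ s → s ≤ t →
      Measure.map (fun ω => Bp t ω - Bp s ω) P = gaussianReal 0 (Real.toNNReal (t - s)))
    (hmG : ∀ s t : ℝ, 0 ≤ s → s ≤ t →
      Measure.map (fun ω => Bm t ω - Bm s ω) P = gaussianReal 0 (Real.toNNReal (t - s)))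
    (hpI : ∀ s t u : ℝ, 0 ≤ s → s ≤ t → t ≤ u →
      IndepFun (fun ω => Bp t ω - Bp s ω) (fun ω => Bp u ω - Bp t ω) P)
    (hmI : ∀ s t u : ℝ, 0 ≤ s → s ≤ t → t ≤ u →
      IndepFun (fun ω => Bm t ω - Bm s ω) (fun ω => Bm u ω - Bm t ω) P)
    (Wt : ℝ → Ω → ℝ) (hWt : ∀ x ω, Wt x ω = if 0 ≤ x then Bp x ω else Bm (-x) ω)
    (L : ℝ → Ω → ℝ) (hL : ∀ x ω, L x ω = Real.exp (Wt x ω - |x| / 2)) :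
    (∀ h h' : ℝ, 0 ≤ h * h' →
      ∫ ω, (Real.sqrt (L h' ω) - Real.sqrt (L h ω))^2 ∂P
        = 2 * (1 - Real.exp (-|h' - h| / 8))) ∧
    (∀ h : ℝ,
      Tendsto (fun h' : ℝ =>
          Real.sqrt (2 * (1 - Real.exp (-|h' - h| / 8))) / |h' - h| ^ ((1:ℝ)/2))
        (𝓝[≠] h) (𝓝 (1/2))) :=
  stmt11_general P Bp Bm hp0 hm0 hpG hmG hpI hmI Wt hWt L hL
end
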